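/- The vector (x*_1, ..., x*_I) is the ⪕-greatest element of the set A_0; in particular it belongs to A_0, and every a ∈ A_0 satisfies a ⪕ (x*_1, ..., x*_I). -/
import Mathlib


/-- The set of indices at which `a` attains its minimum. -/
noncomputable def argminSet {n : ℕ} (a : Fin n → ℝ) : Finset (Fin n) :=
  Finset.univ.filter (fun i => ∀ j, a i ≤ a j)

/-- The minimum entry of `a`. -/
noncomputable def minval {n : ℕ} (a : Fin n → ℝ) : ℝ := ⨅ i, a i

/-- The restriction of `a` to the indices in `S`, reindexed by `Fin S.card`
in increasing order. -/
noncomputable def restrictVec {n : ℕ} (S : Finset (Fin n)) (a : Fin n → ℝ) :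
    Fin S.card → ℝ :=
  fun i => a (S.orderIsoOfFin rfl i).1

/-- The "min-sensitive" partial order `⪕` on `ℝⁿ` (Definition 1 of the paper):
for `n = 1` it is the usual order; for `n ≥ 2`, `a ⪕ b` iff (i) `a = b`, or
(ii) `min a < min b`, or (iii) `min a = min b` and `Argmin b ⊊ Argmin a`, or
(iv) `min a = min b`, `Argmin a = Argmin b ⊊ {1,...,n}` and the restrictions
of `a` and `b` to the complement of the common argmin set are related. -/
noncomputable def msLE : (n : ℕ) → (Fin n → ℝ) → (Fin n → ℝ) → Prop
  | 0, _, _ => True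
  | 1, a, b => a 0 ≤ b 0
  | n + 2, a, b =>
    a = b ∨
    minval a < minval b ∨
    (minval a = minval b ∧ argminSet b ⊂ argminSet a) ∨
    (minval a = minval b ∧ argminSet a = argminSet b ∧ argminSet a ⊂ Finset.univ ∧
      msLE ((argminSet a)ᶜ).card (restrictVec (argminSet a)ᶜ a) (restrictVec (argminSet a)ᶜ b))
termination_by n => n
decreasing_by
  have hne : (argminSet a).Nonempty := by
    obtain ⟨i, -, hi⟩ := Finset.exists_min_image Finset.univ a ⟨0, Finset.mem_univ 0⟩
    refine ⟨i, ?_⟩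
    unfold argminSet
    exact Finset.mem_filter.mpr ⟨Finset.mem_univ i, fun j => hi j (Finset.mem_univ j)⟩
  have h1 : 0 < (argminSet a).card := Finset.card_pos.mpr hne
  have h2 : ((argminSet a)ᶜ).card = Fintype.card (Fin (n + 2)) - (argminSet a).card :=
    Finset.card_compl _
  simp only [Fintype.card_fin] at h2
  omega

/-- `x*_i`: the supremum of the zero set of a function. -/
noncomputable def xstar (f : ℝ → ℝ) : ℝ := sSup {x | f x = 0}

/-- The admissible set `A_t`. -/
def admissible (I J : ℕ) (h : Fin I → ℝ → ℝ) (G : Fin J → Finset (Fin I)) (t : ℝ) :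
    Set (Fin I → ℝ) :=
  {a | (∀ i, a i ≤ t) ∧ ∀ j, (∑ i ∈ G j, h i (a i)) ≤ t}

/-- `F` is the `⪕`-greatest element of `A_t`. -/
def IsGreatestMS (I J : ℕ) (h : Fin I → ℝ → ℝ) (G : Fin J → Finset (Fin I)) (t : ℝ)
    (F : Fin I → ℝ) : Prop :=
  F ∈ admissible I J h G t ∧ ∀ a ∈ admissible I J h G t, msLE I a F

/- ### Auxiliary lemmas -/

lemma my_bdd {n} (a : Fin n → ℝ) : BddBelow (Set.range a) :=
  (Set.finite_range a).bddBelow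

lemma minval_le {n : ℕ} (a : Fin n → ℝ) (j : Fin n) : minval a ≤ a j := by
  haveI : Nonempty (Fin n) := ⟨j⟩
  exact ciInf_le (my_bdd a) j

lemma mem_argminSet_iff {n : ℕ} {a : Fin n → ℝ} {i : Fin n} :
    i ∈ argminSet a ↔ ∀ j, a i ≤ a j := by
  simp [argminSet]

lemma minval_eq {n : ℕ} (a : Fin n → ℝ) {i : Fin n} (hi : i ∈ argminSet a) : minval a = a i := by
  haveI : Nonempty (Fin n) := ⟨i⟩
  exact le_antisymm (minval_le a i) (le_ciInf (mem_argminSet_iff.mp hi))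

lemma msLE_of_le (n : ℕ) : ∀ (a b : Fin n → ℝ), (∀ i, a i ≤ b i) → msLE n a b := by
  induction n using Nat.strong_induction_on with
  | _ n ih =>
    match n, ih with
    | 0, _ => intro a b _; rw [msLE]; trivial
    | 1, _ => intro a b hab; rw [msLE]; exact hab 0
    | n + 2, ih =>
      intro a b hab
      rw [msLE]
      by_cases heq : a = b
      · exact Or.inl heq
      have hmin : minval a ≤ minval b := le_ciInf fun i => (minval_le a i).trans (hab i)
      rcases lt_or_eq_of_le hmin with hlt | hme
      · exact Or.inr (Or.inl hlt)
      have hsub : argminSet b ⊆ argminSet a := by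
        intro i hi
        rw [mem_argminSet_iff]
        intro j
        calc a i ≤ b i := hab i
          _ = minval b := (minval_eq b hi).symm
          _ = minval a := hme.symm
          _ ≤ a j := minval_le a j
      by_cases hss : argminSet b ⊂ argminSet a
      · exact Or.inr (Or.inr (Or.inl ⟨hme, hss⟩))
      have heqs : argminSet a = argminSet b := by
        by_contra hne
        exact hss (hsub.ssubset_of_ne (fun hbe => hne hbe.symm))
      have hagree : ∀ i ∈ argminSet a, a i = b i := by
        intro i hi
        have hib : i ∈ argminSet b := heqs ▸ hi
        rw [← minval_eq a hi, ← minval_eq b hib, hme]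
      by_cases huniv : argminSet a = Finset.univ
      · exact absurd (funext fun i => hagree i (huniv ▸ Finset.mem_univ i)) heq
      · refine Or.inr (Or.inr (Or.inr ⟨hme, heqs, Finset.ssubset_univ_iff.mpr huniv, ?_⟩))
        have hcard : ((argminSet a)ᶜ).card < n + 2 := by
          have hne : (argminSet a).Nonempty := by
            obtain ⟨i, -, hi⟩ := Finset.exists_min_image Finset.univ a ⟨0, Finset.mem_univ 0⟩
            exact ⟨i, mem_argminSet_iff.mpr (fun j => hi j (Finset.mem_univ j))⟩
          have h1 : 0 < (argminSet a).card := Finset.card_pos.mpr hne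
          have h2 := Finset.card_compl (argminSet a)
          simp only [Fintype.card_fin] at h2
          omega
        exact ih _ hcard _ _ (fun i => hab _)

lemma xstar_spec (f : ℝ → ℝ) (hc : Continuous f)
    (ht : Filter.Tendsto f Filter.atTop Filter.atTop)
    (hz : ∃ x, f x = 0) : f (xstar f) = 0 ∧ ∀ x, f x = 0 → x ≤ xstar f := by
  obtain ⟨M, hM⟩ := Filter.eventually_atTop.mp (ht.eventually_ge_atTop 1)
  have hbdd : BddAbove {x | f x = 0} := by
    refine ⟨M, fun x hx => ?_⟩
    by_contra hlt
    push_neg at hlt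
    have h1 := hM x hlt.le
    rw [Set.mem_setOf_eq] at hx
    rw [hx] at h1
    linarith
  have hcl : IsClosed {x | f x = 0} := isClosed_eq hc continuous_const
  have hmem := hcl.csSup_mem hz hbdd
  exact ⟨hmem, fun x hx => le_csSup hbdd hx⟩

/-- the vector `(x*_1, ..., x*_I)` is the `⪕`-greatest element of `A_0`. -/
theorem xstar_isGreatest_at_zero
    (I J : ℕ) (hI : 0 < I) (hJ : 0 < J)
    (h : Fin I → ℝ → ℝ)
    (hcont : ∀ i, Continuous (h i))
    (hnonneg : ∀ i x, 0 ≤ h i x)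
    (hmono : ∀ i, Monotone (h i))
    (htop : ∀ i, Filter.Tendsto (h i) Filter.atTop Filter.atTop)
    (hzero : ∀ i, ∃ x, h i x = 0)
    (hxle : ∀ i, xstar (h i) ≤ 0)
    (G : Fin J → Finset (Fin I))
    (hGinj : Function.Injective G)
    (hGne : ∀ j, (G j).Nonempty)
    (hGcover : ∀ i, ∃ j, i ∈ G j)
 :
    IsGreatestMS I J h G 0 (fun i => xstar (h i)) := by
  have hspec := fun i => xstar_spec (h i) (hcont i) (htop i) (hzero i)
  constructor
  · refine ⟨fun i => hxle i, fun j => ?_⟩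
    have : ∑ i ∈ G j, h i (xstar (h i)) = 0 :=
      Finset.sum_eq_zero fun i _ => (hspec i).1
    rw [this]
  · intro a ha
    obtain ⟨hale, hsum⟩ := ha
    apply msLE_of_le
    intro i
    have hz : h i (a i) = 0 := by
      obtain ⟨j, hij⟩ := hGcover i
      have hnn : ∀ k ∈ G j, 0 ≤ h k (a k) := fun k _ => hnonneg k _
      have hsum0 : ∑ k ∈ G j, h k (a k) = 0 :=
        le_antisymm (hsum j) (Finset.sum_nonneg hnn)
      exact (Finset.sum_eq_zero_iff_of_nonneg hnn).mp hsum0 i hij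
    exact (hspec i).2 _ hz
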